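/- (Weber curve) For λ > 0 define F_0(λ) = −(3/4)λ² + (1/2)λ²·log λ, F_1(λ) = −(1/12)·log λ, and F_g(λ) = (B_{2g}/(2g(2g−2)))·λ^{2−2g} for g ≥ 2. Then for every integer n ≥ 1 and every λ > 0, Σ_{k=1}^{n} (2/(2k)!) · F_{n−k}^{(2k)}(λ) = log λ if n = 1, and = 0 if n ≥ 2. (That is, the free energy F(λ;ℏ) = Σ_{g≥0} ℏ^{2g−2} F_g(λ) of the Weber spectral curve y² = x²/4 − λ satisfies the three-term difference equation F(λ+ℏ) − 2F(λ) + F(λ−ℏ) = log λ order by order in ℏ.) -/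

import Mathlib

/-!
On `(0, ∞)` every `F_g''` is a constant multiple `a_g · log^{(2g)}` with
`a_g = (1 - 2g) B_{2g} / (2g)!` (for `g ≥ 2` because `log^{(2g)} λ = -(2g-1)! λ^{-2g}`), so the
`n`-th equation reads `(Σ_{k=1}^n 2 a_{n-k} / (2k)!) · log^{(2n-2)} λ = [n = 1] log λ`.
Multiplied by `(2n)!/2`, the coefficient identity becomes `Σ_{i<2n} C(2n,i) (1 - i) B_i = [n = 1]`,
odd `i` contributing nothing. Write `1 - i = (1 - m) + (m - i)` with `m = 2n`: the first part
vanishes by the recursion `Σ_{i<m} C(m,i) B_i = 0`, and the second is the derivative of the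
Bernoulli polynomial `B_m` at `1`, i.e. `m B_{m-1}(1)`, which is `1` for `m = 2` and `0` for `m ≥ 4`.
-/

open Finset Real

theorem Finset.sum_range_two_mul {M : Type*} [AddCommMonoid M] (f : ℕ → M) (n : ℕ) :
    ∑ i ∈ range (2 * n), f i = ∑ g ∈ range n, (f (2 * g) + f (2 * g + 1)) := by
  induction n with
  | zero => simp
  | succ n ih =>
    rw [mul_add, mul_one, sum_range_succ, sum_range_succ, ih, sum_range_succ, add_assoc]

theorem sum_range_choose_mul_sub_mul_bernoulli (m : ℕ) :
    ∑ i ∈ range m, (m.choose i : ℚ) * (m - i) * bernoulli i = m * bernoulli' (m - 1) := by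
  have h := congrArg (Polynomial.eval 1) (Polynomial.derivative_bernoulli m)
  rw [Polynomial.eval_mul, Polynomial.eval_natCast, Polynomial.bernoulli_eval_one] at h
  rw [← h, Polynomial.bernoulli, sum_range_succ, Nat.sub_self, map_add,
    Polynomial.derivative_monomial, map_sum, Polynomial.eval_add, Polynomial.eval_finsetSum]
  simp only [Polynomial.derivative_monomial, Polynomial.eval_monomial, one_pow, Nat.cast_zero,
    mul_zero, mul_one, add_zero]
  refine sum_congr rfl fun i hi ↦ ?_
  rw [Nat.cast_sub (mem_range.1 hi).le]
  ring

theorem sum_range_choose_mul_one_sub_mul_bernoulli {m : ℕ} (hm : m ≠ 1) :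
    ∑ i ∈ range m, (m.choose i : ℚ) * (1 - i) * bernoulli i = m * bernoulli' (m - 1) := calc
  _ = ∑ i ∈ range m, ((m.choose i : ℚ) * (m - i) * bernoulli i
        + (1 - m) * ((m.choose i : ℚ) * bernoulli i)) := sum_congr rfl fun i _ ↦ by ring
  _ = _ := by
    rw [sum_add_distrib, ← mul_sum, sum_bernoulli, if_neg hm, mul_zero, add_zero,
      sum_range_choose_mul_sub_mul_bernoulli]

theorem sum_range_choose_two_mul_mul_bernoulli_two_mul (n : ℕ) :
    ∑ g ∈ range n, ((2 * n).choose (2 * g) : ℚ) * (1 - 2 * g) * bernoulli (2 * g)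
      = if n = 1 then 1 else 0 := by
  have h := sum_range_choose_mul_one_sub_mul_bernoulli (m := 2 * n) (by omega)
  have hodd : ∀ g : ℕ, (1 - ((2 * g + 1 : ℕ) : ℚ)) * bernoulli (2 * g + 1) = 0 := by
    rintro (_ | g)
    · simp
    · rw [bernoulli_eq_zero_of_odd ⟨g + 1, by ring⟩ (by omega), mul_zero]
  simp only [sum_range_two_mul, mul_assoc, hodd, mul_zero, add_zero] at h
  push_cast at h
  simp only [← mul_assoc] at h
  rw [h]
  obtain _ | _ | n := n
  · simp
  · norm_num [bernoulli'_one]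
  · rw [bernoulli'_eq_zero_of_odd ⟨n + 1, by omega⟩ (by omega), mul_zero, if_neg (by omega)]

def weberCoeff (g : ℕ) : ℚ := (1 - 2 * g) * bernoulli (2 * g) / (2 * g).factorial

theorem sum_Icc_weberCoeff (n : ℕ) :
    ∑ k ∈ Icc 1 n, 2 / ((2 * k).factorial : ℚ) * weberCoeff (n - k)
      = if n = 1 then 1 else 0 := by
  have hreflect : ∑ k ∈ Icc 1 n, 2 / ((2 * k).factorial : ℚ) * weberCoeff (n - k)
      = ∑ g ∈ range n, 2 / ((2 * (n - g)).factorial : ℚ) * weberCoeff g := by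
    have h := sum_Ico_reflect (fun g ↦ 2 / ((2 * (n - g)).factorial : ℚ) * weberCoeff g) 1
      (le_refl (n + 1))
    rw [Ico_add_one_right_eq_Icc, Nat.sub_self, Nat.add_sub_cancel, ← range_eq_Ico] at h
    rw [← h]
    exact sum_congr rfl fun k hk ↦ by rw [Nat.sub_sub_self (mem_Icc.1 hk).2]
  have hterm : ∀ g ∈ range n, 2 / ((2 * (n - g)).factorial : ℚ) * weberCoeff g
      = 2 / (2 * n).factorial
        * (((2 * n).choose (2 * g) : ℚ) * (1 - 2 * g) * bernoulli (2 * g)) := by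
    intro g hg
    rw [Nat.cast_choose ℚ (by grind), weberCoeff, show 2 * n - 2 * g = 2 * (n - g) by omega]
    field_simp
  rw [hreflect, sum_congr rfl hterm, ← mul_sum, sum_range_choose_two_mul_mul_bernoulli_two_mul]
  split_ifs with hn
  · subst hn
    norm_num
  · rw [mul_zero]

section

open Set

theorem iteratedDeriv_iteratedDeriv {𝕜 F : Type*} [NontriviallyNormedField 𝕜]
    [NormedAddCommGroup F] [NormedSpace 𝕜 F] (j m : ℕ) (f : 𝕜 → F) :
    iteratedDeriv j (iteratedDeriv m f) = iteratedDeriv (j + m) f := by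
  simp only [iteratedDeriv_eq_iterate, Function.iterate_add, Function.comp_apply]

theorem Set.EqOn.iteratedDeriv_add_of_isOpen {𝕜 : Type*} [NontriviallyNormedField 𝕜]
    {f h : 𝕜 → 𝕜} {c : 𝕜} {s : Set 𝕜} {m n : ℕ}
    (hf : EqOn (iteratedDeriv m f) (fun x ↦ c * iteratedDeriv n h x) s) (hs : IsOpen s) (j : ℕ) :
    EqOn (iteratedDeriv (j + m) f) (fun x ↦ c * iteratedDeriv (j + n) h x) s := by
  intro x hx
  rw [← iteratedDeriv_iteratedDeriv, hf.iteratedDeriv_of_isOpen hs j hx,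
    iteratedDeriv_const_mul_field, iteratedDeriv_iteratedDeriv]

theorem iteratedDeriv_two_const_mul_zpow {𝕜 : Type*} [NontriviallyNormedField 𝕜] (c : 𝕜) (m : ℤ)
    (x : 𝕜) : iteratedDeriv 2 (fun y ↦ c * y ^ m) x = c * (m * (m - 1)) * x ^ (m - 2) := by
  rw [iteratedDeriv_const_mul_field, iteratedDeriv_eq_iterate, iter_deriv_zpow]
  simp [prod_range_succ, mul_assoc]

theorem Real.iteratedDeriv_succ_log (k : ℕ) (x : ℝ) :
    iteratedDeriv (k + 1) log x = (-1) ^ k * k.factorial * x ^ (-(k : ℤ) - 1) := by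
  rw [iteratedDeriv_succ', deriv_log', iteratedDeriv_eq_iterate, iter_deriv_inv, neg_sub_comm]

theorem iteratedDeriv_two_weber_genus_zero {x : ℝ} (hx : 0 < x) :
    iteratedDeriv 2 (fun l ↦ -(3 / 4) * l ^ 2 + 1 / 2 * l ^ 2 * log l) x = log x := by
  have hderiv : EqOn (deriv fun l ↦ -(3 / 4) * l ^ 2 + 1 / 2 * l ^ 2 * log l)
      (fun l ↦ -l + l * log l) (Ioi 0) := fun y (hy : 0 < y) ↦
    ((((hasDerivAt_pow 2 y).const_mul _).add
      (((hasDerivAt_pow 2 y).const_mul _).mul (hasDerivAt_log hy.ne'))).deriv).trans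
      (by field_simp; ring)
  have hderiv2 : HasDerivAt (fun l ↦ -l + l * log l) (log x) x :=
    ((hasDerivAt_id x).neg.add ((hasDerivAt_id x).mul (hasDerivAt_log hx.ne'))).congr_deriv
      (by field_simp; simp)
  rw [iteratedDeriv_succ, iteratedDeriv_one,
    (hderiv.eventuallyEq_of_mem (Ioi_mem_nhds hx)).deriv_eq, hderiv2.deriv]

theorem iteratedDeriv_weber (F : ℕ → ℝ → ℝ)
    (hF0 : ∀ l : ℝ, 0 < l → F 0 l = -(3 / 4) * l ^ 2 + 1 / 2 * l ^ 2 * log l)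
    (hF1 : ∀ l : ℝ, 0 < l → F 1 l = -(1 / 12) * log l)
    (hFg : ∀ g : ℕ, 2 ≤ g → ∀ l : ℝ, 0 < l →
      F g l = (bernoulli (2 * g) : ℝ) / (2 * (g : ℝ) * (2 * (g : ℝ) - 2))
                * l ^ (2 - 2 * (g : ℤ)))
    (j g : ℕ) {x : ℝ} (hx : 0 < x) :
    iteratedDeriv (j + 2) (F g) x = weberCoeff g * iteratedDeriv (j + 2 * g) log x := by
  refine EqOn.iteratedDeriv_add_of_isOpen (fun y (hy : 0 < y) ↦ ?_) isOpen_Ioi j hx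
  match g with
  | 0 =>
    rw [EqOn.iteratedDeriv_of_isOpen hF0 isOpen_Ioi 2 hy, iteratedDeriv_two_weber_genus_zero hy]
    simp [weberCoeff]
  | 1 =>
    rw [EqOn.iteratedDeriv_of_isOpen hF1 isOpen_Ioi 2 hy, iteratedDeriv_const_mul_field]
    norm_num [weberCoeff, bernoulli_two]
  | g + 2 =>
    dsimp only
    rw [EqOn.iteratedDeriv_of_isOpen (hFg (g + 2) (by omega)) isOpen_Ioi 2 hy,
      iteratedDeriv_two_const_mul_zpow, show 2 * (g + 2) = 2 * g + 3 + 1 by ring,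
      Real.iteratedDeriv_succ_log, weberCoeff, show 2 * (g + 2) = 2 * g + 3 + 1 by ring,
      Nat.factorial_succ, Odd.neg_one_pow ⟨g + 1, by ring⟩,
      show 2 - 2 * ((g + 2 : ℕ) : ℤ) - 2 = -((2 * g + 3 : ℕ) : ℤ) - 1 by push_cast; ring]
    push_cast
    rw [show 2 * ((g : ℝ) + 2) - 2 = 2 * (g + 1) by ring]
    field_simp
    ring

end

theorem stmt12_general (F : ℕ → ℝ → ℝ)
    (hF0 : ∀ l : ℝ, 0 < l →
      F 0 l = -(3 / 4) * l ^ 2 + 1 / 2 * l ^ 2 * Real.log l)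
    (hF1 : ∀ l : ℝ, 0 < l → F 1 l = -(1 / 12) * Real.log l)
    (hFg : ∀ g : ℕ, 2 ≤ g → ∀ l : ℝ, 0 < l →
      F g l = (bernoulli (2 * g) : ℝ) / (2 * (g : ℝ) * (2 * (g : ℝ) - 2))
                * l ^ (2 - 2 * (g : ℤ)))
    (n : ℕ) (l : ℝ) (hl : 0 < l) :
    ∑ k ∈ Finset.Icc 1 n,
        2 / (Nat.factorial (2 * k) : ℝ) * iteratedDeriv (2 * k) (F (n - k)) l
      = if n = 1 then Real.log l else 0 := by
  have hterm : ∀ k ∈ Finset.Icc 1 n,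
      2 / (Nat.factorial (2 * k) : ℝ) * iteratedDeriv (2 * k) (F (n - k)) l
        = ((2 / (2 * k).factorial * weberCoeff (n - k) : ℚ) : ℝ)
          * iteratedDeriv (2 * (n - 1)) log l := by
    intro k hk
    obtain ⟨hk1, hkn⟩ := mem_Icc.1 hk
    have h := iteratedDeriv_weber F hF0 hF1 hFg (2 * (k - 1)) (n - k) hl
    rw [show 2 * (k - 1) + 2 = 2 * k by omega, show 2 * (k - 1) + 2 * (n - k) = 2 * (n - 1) by omega]
      at h
    rw [h]
    push_cast
    ring
  rw [sum_congr rfl hterm, ← sum_mul, ← Rat.cast_sum, sum_Icc_weberCoeff]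
  split_ifs with hn <;> simp [hn]

/-- (Weber curve) The free energy `F(λ;ℏ) = Σ_{g≥0} ℏ^{2g−2} F_g(λ)` with
`F_0 = −(3/4)λ² + (1/2)λ²log λ`, `F_1 = −(1/12)log λ`,
`F_g = (B_{2g}/(2g(2g−2)))λ^{2−2g}` (g ≥ 2) satisfies
`F(λ+ℏ) − 2F(λ) + F(λ−ℏ) = log λ` order by order in `ℏ`. -/
theorem stmt12 (F : ℕ → ℝ → ℝ)
    (hF0 : ∀ l : ℝ, 0 < l →
      F 0 l = -(3 / 4) * l ^ 2 + 1 / 2 * l ^ 2 * Real.log l)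
    (hF1 : ∀ l : ℝ, 0 < l → F 1 l = -(1 / 12) * Real.log l)
    (hFg : ∀ g : ℕ, 2 ≤ g → ∀ l : ℝ, 0 < l →
      F g l = (bernoulli (2 * g) : ℝ) / (2 * (g : ℝ) * (2 * (g : ℝ) - 2))
                * l ^ (2 - 2 * (g : ℤ)))
    (n : ℕ) (hn : 1 ≤ n) (l : ℝ) (hl : 0 < l) :
    ∑ k ∈ Finset.Icc 1 n,
        2 / (Nat.factorial (2 * k) : ℝ) * iteratedDeriv (2 * k) (F (n - k)) l
      = if n = 1 then Real.log l else 0 :=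
  stmt12_general F hF0 hF1 hFg n l hl
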